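/- arXiv:2010.04345 — 4 statements merged into one kernel-verified Lean document; each statement's English description precedes it below -/
import Mathlib

section
/- For any complex number x with positive real part, |x/|x| - 1| ≤ |Im(x)/Re(x)|. -/
/-!
Normalising `x` does not change the ratio `Im x / Re x`, so it suffices to treat a unit complex
number `z` with `c = Re z > 0`. Then `‖z - 1‖² = 2 (1 - c)` and `(Im z / Re z)² = (1 - c²) / c²`,
and the inequality between them is `(1 - c)² (1 + 2c) ≥ 0`.
-/

namespace Complex

lemma sq_norm_sub_one_of_norm_eq_one {z : ℂ} (hz : ‖z‖ = 1) : ‖z - 1‖ ^ 2 = 2 * (1 - z.re) := by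
  have him := sq_norm_sub_sq_re z
  rw [hz] at him
  rw [Complex.sq_norm, normSq_apply, sub_re, sub_im, one_re, one_im]
  linear_combination -him

lemma norm_sub_one_le_abs_im_div_re {z : ℂ} (hz : ‖z‖ = 1) (hre : 0 < z.re) :
    ‖z - 1‖ ≤ |z.im / z.re| := by
  have him : z.im ^ 2 = 1 - z.re ^ 2 := by rw [← sq_norm_sub_sq_re, hz, one_pow]
  have hre_le : z.re ≤ 1 := hz ▸ re_le_norm z
  refine (sq_le_sq₀ (norm_nonneg _) (abs_nonneg _)).1 ?_
  rw [sq_norm_sub_one_of_norm_eq_one hz, sq_abs, div_pow, him, le_div_iff₀ (by positivity)]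
  nlinarith [mul_nonneg (mul_nonneg (sub_nonneg.2 hre_le) (sub_nonneg.2 hre_le)) hre.le]

lemma im_div_re_div_norm {x : ℂ} (hx : x ≠ 0) :
    (x / (‖x‖ : ℂ)).im / (x / (‖x‖ : ℂ)).re = x.im / x.re := by
  rw [div_ofReal_im, div_ofReal_re, div_div_div_cancel_right₀ (norm_ne_zero_iff.2 hx)]

lemma norm_div_norm {x : ℂ} (hx : x ≠ 0) : ‖x / (‖x‖ : ℂ)‖ = 1 := by
  rw [norm_div, norm_real, norm_norm, div_self (norm_ne_zero_iff.2 hx)]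

end Complex

theorem stmt_0 (x : ℂ) (hx : 0 < x.re) :
    ‖x / (‖x‖ : ℂ) - 1‖ ≤ |x.im / x.re| := by
  have hx0 : x ≠ 0 := fun h => by simp [h] at hx
  have hre : 0 < (x / (‖x‖ : ℂ)).re := by
    rw [Complex.div_ofReal_re]
    exact div_pos hx (norm_pos_iff.2 hx0)
  simpa only [Complex.im_div_re_div_norm hx0] using
    Complex.norm_sub_one_le_abs_im_div_re (Complex.norm_div_norm hx0) hre
end

section
/- For any two vectors z, z* ∈ ℂⁿ with unit-modulus entries, the loss ℓ(z, z*) = min_{|a|=1} ∑_j |z_j a - z*_j|² and the Frobenius distance of rank-one matrices satisfy the identity ‖z z^H - z* (z*)^H‖_F² = ℓ(z, z*) · (2n - ℓ(z, z*)/2). -/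
/-!
Put `w = ∑ⱼ zⱼ conj z*ⱼ`. For `|a| = 1` each term of the loss expands as
`|zⱼ a - z*ⱼ|² = 2 - 2 Re (a zⱼ conj z*ⱼ)`, so the loss is `2n - 2 max_{|a|=1} Re (a w) = 2n - 2|w|`.
Expanding the Frobenius norm the same way gives `‖z zᴴ - z* z*ᴴ‖_F² = 2n² - 2|w|²`,
and `2n² - 2|w|² = (2n - 2|w|)(n + |w|)` is the claimed identity.
-/

open Finset

/-- The phase synchronization loss `ℓ(z, z*) = min_{|a|=1} ∑_j |z_j a - z*_j|²`. -/
noncomputable def loss {n : ℕ} (z zs : Fin n → ℂ) : ℝ :=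
  sInf {s : ℝ | ∃ a : ℂ, ‖a‖ = 1 ∧ s = ∑ j, ‖z j * a - zs j‖ ^ 2}

open ComplexConjugate

lemma Complex.sq_norm_sub (u v : ℂ) : ‖u - v‖ ^ 2 = ‖u‖ ^ 2 + ‖v‖ ^ 2 - 2 * (u * conj v).re := by
  simp only [Complex.sq_norm, Complex.normSq_sub]

section

variable {ι : Type*} [Fintype ι]

lemma sum_sq_norm_mul_sub {a : ℂ} (ha : ‖a‖ = 1) (z zs : ι → ℂ) :
    ∑ j, ‖z j * a - zs j‖ ^ 2
      = ∑ j, ‖z j‖ ^ 2 + ∑ j, ‖zs j‖ ^ 2 - 2 * (a * ∑ j, z j * conj (zs j)).re := by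
  rw [mul_sum, Complex.re_sum, mul_sum, ← sum_add_distrib, ← sum_sub_distrib]
  refine sum_congr rfl fun j _ => ?_
  rw [Complex.sq_norm_sub, norm_mul, ha]
  ring_nf

lemma sum_sum_sq_norm_sub_rankOne (z zs : ι → ℂ) :
    ∑ j, ∑ k, ‖z j * conj (z k) - zs j * conj (zs k)‖ ^ 2
      = (∑ j, ‖z j‖ ^ 2) ^ 2 + (∑ j, ‖zs j‖ ^ 2) ^ 2 - 2 * ‖∑ j, z j * conj (zs j)‖ ^ 2 := by
  have hw : ‖∑ j, z j * conj (zs j)‖ ^ 2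
      = ∑ j, ∑ k, (z j * conj (z k) * conj (zs j * conj (zs k))).re := by
    rw [← Complex.ofReal_re (_ ^ 2), Complex.ofReal_pow, ← Complex.mul_conj']
    simp only [map_sum, map_mul, Complex.conj_conj, sum_mul_sum, Complex.re_sum]
    refine sum_congr rfl fun j _ => sum_congr rfl fun k _ => ?_
    ring_nf
  rw [sq (∑ j, ‖z j‖ ^ 2), sq (∑ j, ‖zs j‖ ^ 2), sum_mul_sum, sum_mul_sum, hw]
  simp only [mul_sum, ← sum_add_distrib, ← sum_sub_distrib]
  refine sum_congr rfl fun j _ => sum_congr rfl fun k _ => ?_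
  rw [Complex.sq_norm_sub, norm_mul, norm_mul, Complex.norm_conj, Complex.norm_conj]
  ring

end

lemma isLeast_sub_two_mul_re_mul (c : ℝ) (w : ℂ) :
    IsLeast {s : ℝ | ∃ a : ℂ, ‖a‖ = 1 ∧ s = c - 2 * (a * w).re} (c - 2 * ‖w‖) := by
  have hrot : Complex.exp (↑(-w.arg) * Complex.I) * w = ‖w‖ := by
    nth_rw 2 [← Complex.norm_mul_exp_arg_mul_I w]
    rw [mul_left_comm, ← Complex.exp_add]
    simp
  refine ⟨⟨_, Complex.norm_exp_ofReal_mul_I _, by rw [hrot, Complex.ofReal_re]⟩, ?_⟩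
  · rintro s ⟨a, ha, rfl⟩
    have := Complex.re_le_norm (a * w)
    rw [norm_mul, ha, one_mul] at this
    linarith

lemma loss_eq {n : ℕ} (z zs : Fin n → ℂ) :
    loss z zs = ∑ j, ‖z j‖ ^ 2 + ∑ j, ‖zs j‖ ^ 2 - 2 * ‖∑ j, z j * conj (zs j)‖ := by
  have hvalues : {s : ℝ | ∃ a : ℂ, ‖a‖ = 1 ∧ s = ∑ j, ‖z j * a - zs j‖ ^ 2}
      = {s : ℝ | ∃ a : ℂ, ‖a‖ = 1 ∧
          s = ∑ j, ‖z j‖ ^ 2 + ∑ j, ‖zs j‖ ^ 2 - 2 * (a * ∑ j, z j * conj (zs j)).re} := by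
    ext s
    exact exists_congr fun a => and_congr_right fun ha => by rw [sum_sq_norm_mul_sub ha]
  rw [loss, hvalues]
  exact (isLeast_sub_two_mul_re_mul _ _).csInf_eq

theorem stmt_6_general (n : ℕ) (z zs : Fin n → ℂ)
    (hz : ∀ j, ‖z j‖ = 1) (hzs : ∀ j, ‖zs j‖ = 1) :
    ∑ j, ∑ k, ‖z j * (starRingEnd ℂ) (z k) - zs j * (starRingEnd ℂ) (zs k)‖ ^ 2
      = loss z zs * (2 * n - loss z zs / 2) := by
  have hsum : ∀ v : Fin n → ℂ, (∀ j, ‖v j‖ = 1) → ∑ j, ‖v j‖ ^ 2 = n := fun v hv => by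
    simp [hv]
  rw [sum_sum_sq_norm_sub_rankOne, loss_eq, hsum z hz, hsum zs hzs]
  ring

theorem stmt_6 (n : ℕ) (hn : 0 < n) (z zs : Fin n → ℂ)
    (hz : ∀ j, ‖z j‖ = 1) (hzs : ∀ j, ‖zs j‖ = 1) :
    ∑ j, ∑ k, ‖z j * (starRingEnd ℂ) (z k) - zs j * (starRingEnd ℂ) (zs k)‖ ^ 2
      = loss z zs * (2 * n - loss z zs / 2) :=
  stmt_6_general n z zs hz hzs
end

section
/- Let z⁰, ẑ, z* ∈ ℂⁿ all have unit-modulus entries and suppose that for all pairs j ≠ k, z⁰_j conj(z⁰_k) = (ẑ_j conj(ẑ_k)) / |ẑ_j conj(ẑ_k)| whenever ẑ_j conj(ẑ_k) ≠ 0. Then ‖z⁰ (z⁰)^H - z* (z*)^H‖_F ≤ 2 ‖ẑ ẑ^H - z* (z*)^H‖_F. -/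
/-- Normalizing `w` moves it by `|‖w‖ - ‖y‖| ≤ ‖w - y‖`; then use the triangle inequality. -/
theorem norm_inv_norm_smul_sub_le {E : Type*} [NormedAddCommGroup E] [NormedSpace ℝ E]
    (w : E) {y : E} (hy : ‖y‖ = 1) : ‖‖w‖⁻¹ • w - y‖ ≤ 2 * ‖w - y‖ := by
  rcases eq_or_ne w 0 with rfl | hw
  · simp [hy]
  have hnormalize : ‖‖w‖⁻¹ • w - w‖ = |‖w‖ - ‖y‖| := by
    have hw' : ‖w‖ ≠ 0 := norm_ne_zero_iff.mpr hw
    rw [show ‖w‖⁻¹ • w - w = (‖w‖⁻¹ - 1) • w by rw [sub_smul, one_smul], norm_smul,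
      show ‖w‖⁻¹ - 1 = (1 - ‖w‖) / ‖w‖ by field_simp, norm_div, norm_norm,
      div_mul_cancel₀ _ hw', Real.norm_eq_abs, hy, abs_sub_comm]
  calc ‖‖w‖⁻¹ • w - y‖ ≤ ‖‖w‖⁻¹ • w - w‖ + ‖w - y‖ := norm_sub_le_norm_sub_add_norm_sub _ _ _
    _ ≤ ‖w - y‖ + ‖w - y‖ := by rw [hnormalize]; gcongr; exact abs_norm_sub_norm_le w y
    _ = 2 * ‖w - y‖ := by ring

theorem Complex.norm_div_norm_sub_le (w : ℂ) {y : ℂ} (hy : ‖y‖ = 1) :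
    ‖w / (‖w‖ : ℂ) - y‖ ≤ 2 * ‖w - y‖ := by
  simpa [div_eq_inv_mul, Complex.real_smul] using norm_inv_norm_smul_sub_le w hy

theorem Real.sqrt_sum_sq_le_mul {ι : Type*} (s : Finset ι) {f g : ι → ℝ} {c : ℝ} (hc : 0 ≤ c)
    (hf : ∀ i ∈ s, 0 ≤ f i) (hfg : ∀ i ∈ s, f i ≤ c * g i) :
    √(∑ i ∈ s, f i ^ 2) ≤ c * √(∑ i ∈ s, g i ^ 2) := by
  rw [← Real.sqrt_sq hc, ← Real.sqrt_mul (sq_nonneg c), Finset.mul_sum]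
  refine Real.sqrt_le_sqrt (Finset.sum_le_sum fun i hi => ?_)
  rw [← mul_pow]
  exact pow_le_pow_left₀ (hf i hi) (hfg i hi) 2

open Finset in
theorem stmt_16_general (n : ℕ) (z0 zh zs : Fin n → ℂ)
    (hz0 : ∀ j, ‖z0 j‖ = 1) (hzs : ∀ j, ‖zs j‖ = 1)
    (hzh : ∀ j, zh j ≠ 0)
    (hnorm : ∀ j k, j ≠ k → zh j * (starRingEnd ℂ) (zh k) ≠ 0 →
      z0 j * (starRingEnd ℂ) (z0 k)
        = zh j * (starRingEnd ℂ) (zh k) / (‖zh j * (starRingEnd ℂ) (zh k)‖ : ℂ)) :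
    Real.sqrt (∑ j, ∑ k,
        ‖z0 j * (starRingEnd ℂ) (z0 k) - zs j * (starRingEnd ℂ) (zs k)‖ ^ 2)
      ≤ 2 * Real.sqrt (∑ j, ∑ k,
        ‖zh j * (starRingEnd ℂ) (zh k) - zs j * (starRingEnd ℂ) (zs k)‖ ^ 2) := by
  simp only [← Fintype.sum_prod_type']
  refine Real.sqrt_sum_sq_le_mul _ zero_le_two (fun _ _ => norm_nonneg _) ?_
  rintro ⟨j, k⟩ -
  rcases eq_or_ne j k with rfl | hjk
  · simp [Complex.mul_conj, Complex.normSq_eq_norm_sq, hz0, hzs]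
  have hw : zh j * starRingEnd ℂ (zh k) ≠ 0 := mul_ne_zero (hzh j) (by simpa using hzh k)
  have hy : ‖zs j * starRingEnd ℂ (zs k)‖ = 1 := by simp [hzs]
  rw [hnorm j k hjk hw]
  exact Complex.norm_div_norm_sub_le _ hy

open Finset in
theorem stmt_16 (n : ℕ) (hn : 0 < n) (z0 zh zs : Fin n → ℂ)
    (hz0 : ∀ j, ‖z0 j‖ = 1) (hzs : ∀ j, ‖zs j‖ = 1)
    (hzh : ∀ j, zh j ≠ 0)
    (hnorm : ∀ j k, j ≠ k → zh j * (starRingEnd ℂ) (zh k) ≠ 0 →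
      z0 j * (starRingEnd ℂ) (z0 k)
        = zh j * (starRingEnd ℂ) (zh k) / (‖zh j * (starRingEnd ℂ) (zh k)‖ : ℂ)) :
    Real.sqrt (∑ j, ∑ k,
        ‖z0 j * (starRingEnd ℂ) (z0 k) - zs j * (starRingEnd ℂ) (zs k)‖ ^ 2)
      ≤ 2 * Real.sqrt (∑ j, ∑ k,
        ‖zh j * (starRingEnd ℂ) (zh k) - zs j * (starRingEnd ℂ) (zs k)‖ ^ 2) :=
  stmt_16_general n z0 zh zs hz0 hzs hzh hnorm
end

section
/- Fix a symmetric 0/1 array A on [n]×[n] with zero diagonal such that ∑_{k≠j} A_{jk} > 0 for every j, a Hermitian matrix Y ∈ ℂ^{n×n}, and define the map f : ℂ₁ⁿ → ℂ₁ⁿ whose j-th coordinate is (∑_{k≠j} A_{jk} Y_{jk} z_k)/|∑_{k≠j} A_{jk} Y_{jk} z_k| when the numerator is nonzero and 1 otherwise, where ℂ₁ⁿ is the set of vectors with unit-modulus entries. Then any ẑ ∈ ℂ₁ⁿ maximizing z ↦ ∑_{j,k} conj(z_j) A_{jk} Y_{jk} z_k over ℂ₁ⁿ, and such that ∑_{k≠j}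 A_{jk} Y_{jk} ẑ_k ≠ 0 for all j, is a fixed point: f(ẑ) = ẑ. -/
/-! For the Hermitian, zero-diagonal matrix `B = A ∘ Y`, changing one coordinate `z j` of a point
of the torus to `u` changes `re (zᴴ B z)` by `2 re (conj (u - z j) * (B z) j)`, so at a maximizer every
coordinate maximizes `u ↦ re (conj u * (B z) j)` over the unit circle, whose unique maximizer is
`(B z) j / ‖(B z) j‖`. -/

open Finset

/-- The generalized power method map: entrywise normalization of `(A ∘ Y) z`. -/
noncomputable def gpmMap {n : ℕ} (A : Fin n → Fin n → ℝ) (Y : Fin n → Fin n → ℂ)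
    (z : Fin n → ℂ) : Fin n → ℂ := fun j =>
  let w := ∑ k ∈ univ.erase j, (A j k : ℂ) * Y j k * z k
  if w ≠ 0 then w / (‖w‖ : ℂ) else 1

open Matrix ComplexConjugate

theorem Function.update_eq_add_single_sub {ι G : Type*} [DecidableEq ι] [AddCommGroup G]
    (z : ι → G) (j : ι) (u : G) :
    Function.update z j u = z + Pi.single j (u - z j) := by
  ext i
  rcases eq_or_ne i j with rfl | h <;> simp [*, add_sub_cancel]

theorem Complex.eq_div_norm_of_forall_re_conj_mul_le {v w : ℂ} (hv : ‖v‖ = 1) (hw : w ≠ 0)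
    (hmax : ∀ u : ℂ, ‖u‖ = 1 → (conj u * w).re ≤ (conj v * w).re) :
    v = w / ‖w‖ := by
  have hw' : ‖w‖ ≠ 0 := norm_ne_zero_iff.mpr hw
  have hnorm : ‖conj v * w‖ = ‖w‖ := by simp [hv]
  have hre : (conj v * w).re = ‖conj v * w‖ := by
    refine le_antisymm (Complex.re_le_norm _) ?_
    have := hmax (w / ‖w‖) (by simp [hw])
    rwa [map_div₀, Complex.conj_ofReal, div_mul_eq_mul_div, Complex.conj_mul',
      ← Complex.ofReal_pow, ← Complex.ofReal_div, Complex.ofReal_re, sq,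
      mul_div_cancel_right₀ _ hw', ← hnorm] at this
  have hreal : conj v * w = ‖w‖ :=
    hnorm ▸ Complex.eq_coe_norm_of_nonneg (Complex.re_eq_norm.mp hre)
  rw [eq_div_iff (by exact_mod_cast hw'), ← hreal, ← mul_assoc, Complex.mul_conj', hv]
  simp

namespace Matrix

variable {ι : Type*} [Fintype ι] [DecidableEq ι] {B : Matrix ι ι ℂ}

theorem IsHermitian.re_star_dotProduct_mulVec_add_single (hB : B.IsHermitian) {j : ι}
    (hj : B j j = 0) (z : ι → ℂ) (δ : ℂ) :
    (star (z + Pi.single j δ) ⬝ᵥ B *ᵥ (z + Pi.single j δ)).re =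
      (star z ⬝ᵥ B *ᵥ z).re + 2 * (conj δ * (B *ᵥ z) j).re := by
  have hcross : star z ⬝ᵥ B *ᵥ Pi.single j δ = conj (conj δ * (B *ᵥ z) j) := by
    have : star z ᵥ* B = star (B *ᵥ z) := by rw [star_mulVec, hB.eq]
    rw [dotProduct_mulVec, this, dotProduct_single]
    simp [mul_comm]
  have hdiag : star (Pi.single j δ) ⬝ᵥ B *ᵥ Pi.single j δ = 0 := by
    rw [← Pi.single_star, single_dotProduct, mulVec_single]
    simp [hj]
  rw [star_add, mulVec_add, add_dotProduct, dotProduct_add, dotProduct_add, hcross, hdiag,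
    ← Pi.single_star, single_dotProduct, Complex.star_def]
  simp only [Complex.add_re, Complex.conj_re, add_zero]
  ring

theorem IsHermitian.eq_mulVec_div_norm_of_isMaxOn (hB : B.IsHermitian) (hdiag : ∀ j, B j j = 0)
    {z : ι → ℂ} (hz : ∀ j, ‖z j‖ = 1)
    (hmax : ∀ v : ι → ℂ, (∀ j, ‖v j‖ = 1) → (star v ⬝ᵥ B *ᵥ v).re ≤ (star z ⬝ᵥ B *ᵥ z).re)
    {j : ι} (hBz : (B *ᵥ z) j ≠ 0) :
    z j = (B *ᵥ z) j / ‖(B *ᵥ z) j‖ := by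
  refine Complex.eq_div_norm_of_forall_re_conj_mul_le (hz j) hBz fun u hu => ?_
  have hupdate : ∀ k, ‖Function.update z j u k‖ = 1 := fun k => by
    rcases eq_or_ne k j with rfl | hk <;> simp [*]
  have := hmax _ hupdate
  rw [Function.update_eq_add_single_sub, hB.re_star_dotProduct_mulVec_add_single (hdiag j),
    map_sub, sub_mul, Complex.sub_re] at this
  linarith

end Matrix

theorem stmt_19_general (n : ℕ)
    (A : Fin n → Fin n → ℝ)
    (hAsymm : ∀ j k, A k j = A j k) (hAdiag : ∀ j, A j j = 0)
    (Y : Fin n → Fin n → ℂ) (hY : ∀ j k, Y k j = (starRingEnd ℂ) (Y j k))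
    (zh : Fin n → ℂ) (hzh : ∀ j, ‖zh j‖ = 1)
    (hmax : ∀ z : Fin n → ℂ, (∀ j, ‖z j‖ = 1) →
      (∑ j, ∑ k, (starRingEnd ℂ) (z j) * (A j k : ℂ) * Y j k * z k).re
        ≤ (∑ j, ∑ k, (starRingEnd ℂ) (zh j) * (A j k : ℂ) * Y j k * zh k).re)
    (hnz : ∀ j, ∑ k ∈ univ.erase j, (A j k : ℂ) * Y j k * zh k ≠ 0) :
    gpmMap A Y zh = zh := by
  set B : Matrix (Fin n) (Fin n) ℂ := Matrix.of fun j k => (A j k : ℂ) * Y j k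
  have hB : B.IsHermitian := by
    ext j k
    simp [B, hAsymm j k, hY j k]
  have hquad : ∀ z : Fin n → ℂ,
      ∑ j, ∑ k, conj (z j) * (A j k : ℂ) * Y j k * z k = star z ⬝ᵥ B *ᵥ z := fun z => by
    simp only [B, dotProduct, mulVec, of_apply, Pi.star_apply, Complex.star_def, Finset.mul_sum,
      mul_assoc]
  have hrow : ∀ j, ∑ k ∈ univ.erase j, (A j k : ℂ) * Y j k * zh k = (B *ᵥ zh) j := fun j =>
    Finset.sum_erase _ (by simp [hAdiag])
  funext j
  simp only [gpmMap, hquad] at hmax ⊢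
  rw [if_pos (hnz j), hrow, ← hB.eq_mulVec_div_norm_of_isMaxOn (by simp [B, hAdiag]) hzh hmax]
  exact hrow j ▸ hnz j

theorem stmt_19 (n : ℕ) (hn : 0 < n)
    (A : Fin n → Fin n → ℝ)
    (hA01 : ∀ j k, A j k = 0 ∨ A j k = 1)
    (hAsymm : ∀ j k, A k j = A j k) (hAdiag : ∀ j, A j j = 0)
    (hAdeg : ∀ j, 0 < ∑ k ∈ univ.erase j, A j k)
    (Y : Fin n → Fin n → ℂ) (hY : ∀ j k, Y k j = (starRingEnd ℂ) (Y j k))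
    (zh : Fin n → ℂ) (hzh : ∀ j, ‖zh j‖ = 1)
    (hmax : ∀ z : Fin n → ℂ, (∀ j, ‖z j‖ = 1) →
      (∑ j, ∑ k, (starRingEnd ℂ) (z j) * (A j k : ℂ) * Y j k * z k).re
        ≤ (∑ j, ∑ k, (starRingEnd ℂ) (zh j) * (A j k : ℂ) * Y j k * zh k).re)
    (hnz : ∀ j, ∑ k ∈ univ.erase j, (A j k : ℂ) * Y j k * zh k ≠ 0) :
    gpmMap A Y zh = zh :=
  stmt_19_general n A hAsymm hAdiag Y hY zh hzh hmax hnz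
end
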